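/- Let G be a profinite group and let M be a closed subgroup of G. Then M is a modular element of L_c(G) if and only if, for every open normal subgroup N of G, the image of M in the finite quotient group G/N is a modular element of the lattice of all subgroups of G/N. -/

import Mathlib

/-- A closed subgroup `M` of a profinite group `G` is a modular element of the lattice of
closed subgroups of `G`. -/
def IsModularElementClosed {G : Type*} [Group G] [TopologicalSpace G] [IsTopologicalGroup G]
    (M : Subgroup G) : Prop :=
  (∀ X Z : Subgroup G, IsClosed (X : Set G) → IsClosed (Z : Set G) → X ≤ Z →
      (X ⊔ (M ⊓ Z)).topologicalClosure = (X ⊔ M).topologicalClosure ⊓ Z) ∧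
  (∀ Y Z : Subgroup G, IsClosed (Y : Set G) → IsClosed (Z : Set G) → M ≤ Z →
      (M ⊔ (Y ⊓ Z)).topologicalClosure = (M ⊔ Y).topologicalClosure ⊓ Z)

/-- A subgroup `m` of a group `K` is a modular element of the subgroup lattice of `K`. -/
def IsModularElement {K : Type*} [Group K] (m : Subgroup K) : Prop :=
  (∀ X Z : Subgroup K, X ≤ Z → X ⊔ (m ⊓ Z) = (X ⊔ m) ⊓ Z) ∧
  (∀ Y Z : Subgroup K, m ≤ Z → m ⊔ (Y ⊓ Z) = (m ⊔ Y) ⊓ Z)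

/-!
Both sides are modular laws for triples `(A, B, C)` with `A ≤ C`: `cl (A ⊔ (B ⊓ C)) =
cl (A ⊔ B) ⊓ C` in `G` and `A ⊔ (B ⊓ C) = (A ⊔ B) ⊓ C` in `G/N`, and `≤` holds for free.

For an open normal `N`, subgroups containing `N` are open, hence closed; so the closed law for
the preimages of subgroups of `G/N` (with `M` itself in its slot) holds without closures, and
`G → G/N`, whose kernel lies in the third member, carries it to the law in `G/N`.

Conversely, the closure of `H` is `⋂ₙ H N` over the open normal subgroups `N`, so it suffices
to show that `g ∈ cl (A ⊔ B) ⊓ C` lies in `(A ⊔ (B ⊓ C)) N₀` for each such `N₀`. By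
compactness, `⋂ₙ (B N ∩ C N) = B ∩ C` yields an open normal `N` with
`B N ∩ C N ⊆ (B ∩ C) N₀`, and the modular law in `G/N`, pulled back to `G`, puts `g` in
`A N (B N ∩ C N) ⊆ (A ⊔ (B ⊓ C)) N₀`.
-/

section Map

variable {G K : Type*} [Group G] [Group K]

theorem Subgroup.map_inf_of_ker_le (f : G →* K) {A B : Subgroup G} (h : f.ker ≤ B) :
    (A ⊓ B).map f = A.map f ⊓ B.map f := by
  refine le_antisymm (map_inf_le A B f) ?_
  rintro _ ⟨⟨a, ha, rfl⟩, ⟨b, hb, hab⟩⟩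
  have hba : b⁻¹ * a ∈ f.ker := by rw [MonoidHom.mem_ker, map_mul, map_inv, hab, inv_mul_cancel]
  exact ⟨a, ⟨ha, by simpa using mul_mem hb (h hba)⟩, rfl⟩

theorem Subgroup.map_sup_inf_eq_of_ker_le (f : G →* K) {A B C : Subgroup G} (hC : f.ker ≤ C)
    (h : A ⊔ (B ⊓ C) = (A ⊔ B) ⊓ C) :
    A.map f ⊔ (B.map f ⊓ C.map f) = (A.map f ⊔ B.map f) ⊓ C.map f := by
  rw [← map_inf_of_ker_le f hC, ← map_sup, h, map_inf_of_ker_le f hC, map_sup]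

theorem QuotientGroup.sup_inf_le_of_map_mk' {N : Subgroup G} [N.Normal] {A B C : Subgroup G}
    (h : (A.map (mk' N) ⊔ B.map (mk' N)) ⊓ C.map (mk' N) ≤
      A.map (mk' N) ⊔ (B.map (mk' N) ⊓ C.map (mk' N))) :
    (A ⊔ N ⊔ (B ⊔ N)) ⊓ (C ⊔ N) ≤ A ⊔ N ⊔ ((B ⊔ N) ⊓ (C ⊔ N)) := by
  simpa only [Subgroup.comap_inf, ← Subgroup.comap_sup_eq _ _ _ (mk'_surjective N),
    Subgroup.comap_map_eq, ker_mk'] using Subgroup.comap_mono (f := mk' N) h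

end Map

section TopologicalGroup

variable {G : Type*} [Group G] [TopologicalSpace G] [IsTopologicalGroup G]

theorem Subgroup.isClosed_of_isOpen_le {N H : Subgroup G} (hN : IsOpen (N : Set G)) (h : N ≤ H) :
    IsClosed (H : Set G) :=
  H.isClosed_of_isOpen (isOpen_mono h hN)

theorem Subgroup.topologicalClosure_eq_self_of_isOpen_le {N H : Subgroup G}
    (hN : IsOpen (N : Set G)) (h : N ≤ H) : H.topologicalClosure = H :=
  le_antisymm (H.topologicalClosure_minimal le_rfl (isClosed_of_isOpen_le hN h))
    H.le_topologicalClosure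

theorem Subgroup.topologicalClosure_sup_inf_le {A B C : Subgroup G} (hAC : A ≤ C)
    (hC : IsClosed (C : Set G)) :
    (A ⊔ (B ⊓ C)).topologicalClosure ≤ (A ⊔ B).topologicalClosure ⊓ C :=
  topologicalClosure_minimal _
    (le_inf ((sup_le_sup_left inf_le_left A).trans (A ⊔ B).le_topologicalClosure)
      (sup_le hAC inf_le_right))
    ((A ⊔ B).isClosed_topologicalClosure.inter hC)

theorem QuotientGroup.map_mk'_sup_inf_eq_of_topologicalClosure {N : Subgroup G} [N.Normal]
    (hN : IsOpen (N : Set G)) {A B C : Subgroup G} (hNA : N ≤ A ⊔ (B ⊓ C)) (hNC : N ≤ C)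
    (h : (A ⊔ (B ⊓ C)).topologicalClosure = (A ⊔ B).topologicalClosure ⊓ C) :
    A.map (mk' N) ⊔ (B.map (mk' N) ⊓ C.map (mk' N)) =
      (A.map (mk' N) ⊔ B.map (mk' N)) ⊓ C.map (mk' N) := by
  have hNAB : N ≤ A ⊔ B := hNA.trans (sup_le_sup_left inf_le_left A)
  rw [Subgroup.topologicalClosure_eq_self_of_isOpen_le hN hNA,
    Subgroup.topologicalClosure_eq_self_of_isOpen_le hN hNAB] at h
  exact Subgroup.map_sup_inf_eq_of_ker_le _ (by rwa [ker_mk']) h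

end TopologicalGroup

section Profinite

variable {G : Type*} [Group G] [TopologicalSpace G] [IsTopologicalGroup G]
  [CompactSpace G] [TotallyDisconnectedSpace G]

theorem Subgroup.mem_topologicalClosure_iff_forall_openNormalSubgroup {H : Subgroup G} {g : G} :
    g ∈ H.topologicalClosure ↔ ∀ N : OpenNormalSubgroup G, g ∈ H ⊔ (N : Subgroup G) := by
  refine ⟨fun hg N ↦ H.topologicalClosure_minimal le_sup_left
    (isClosed_of_isOpen_le N.isOpen le_sup_right) hg, fun h ↦ ?_⟩
  refine (ProfiniteGrp.closedSubgroup_eq_sInf_open ⟨_, H.isClosed_topologicalClosure⟩).ge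
    (mem_sInf.2 fun U ⟨hU, hHU⟩ ↦ ?_)
  obtain ⟨N, hNU⟩ := ProfiniteGrp.exist_openNormalSubgroup_sub_open_nhds_of_one hU U.one_mem
  exact sup_le (H.le_topologicalClosure.trans hHU) hNU (h N)

theorem Subgroup.mem_of_forall_openNormalSubgroup {H : Subgroup G} (hH : IsClosed (H : Set G))
    {g : G} (h : ∀ N : OpenNormalSubgroup G, g ∈ H ⊔ (N : Subgroup G)) : g ∈ H := by
  have hg := mem_topologicalClosure_iff_forall_openNormalSubgroup.2 h
  rwa [← SetLike.mem_coe, topologicalClosure_coe, hH.closure_eq] at hg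

theorem exists_openNormalSubgroup_sup_inf_sup_le {A B : Subgroup G} (hA : IsClosed (A : Set G))
    (hB : IsClosed (B : Set G)) (N₀ : OpenNormalSubgroup G) :
    ∃ N : OpenNormalSubgroup G, (A ⊔ N) ⊓ (B ⊔ N) ≤ A ⊓ B ⊔ (N₀ : Subgroup G) := by
  let V (N : OpenNormalSubgroup G) : Set G := ((A ⊔ N) ⊓ (B ⊔ N) : Subgroup G)
  have hV_closed (N : OpenNormalSubgroup G) : IsClosed (V N) :=
    (Subgroup.isClosed_of_isOpen_le N.isOpen le_sup_right).inter
      (Subgroup.isClosed_of_isOpen_le N.isOpen le_sup_right)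
  have hV_mono : Monotone V := fun N N' h ↦
    have h' : (N : Subgroup G) ≤ N' := h
    SetLike.coe_subset_coe.2 (inf_le_inf (sup_le_sup_left h' A) (sup_le_sup_left h' B))
  have : Nonempty (OpenNormalSubgroup G) := ⟨N₀⟩
  obtain ⟨N, hN⟩ := exists_subset_nhds_of_isCompact' hV_mono.directed_ge
    (fun N ↦ (hV_closed N).isCompact) hV_closed
    (U := ((A ⊓ B ⊔ N₀ : Subgroup G) : Set G)) fun x hx ↦ by
      rw [Set.mem_iInter] at hx
      refine (Subgroup.isOpen_mono le_sup_right N₀.isOpen).mem_nhds (Subgroup.mem_sup_left ⟨?_, ?_⟩)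
      · exact Subgroup.mem_of_forall_openNormalSubgroup hA fun N ↦ (hx N).1
      · exact Subgroup.mem_of_forall_openNormalSubgroup hB fun N ↦ (hx N).2
  exact ⟨N, hN⟩

theorem Subgroup.topologicalClosure_sup_inf_ge_of_forall_openNormalSubgroup {A B C : Subgroup G}
    (hB : IsClosed (B : Set G)) (hC : IsClosed (C : Set G))
    (h : ∀ N : OpenNormalSubgroup G, let π := QuotientGroup.mk' (N : Subgroup G)
      (A.map π ⊔ B.map π) ⊓ C.map π ≤ A.map π ⊔ (B.map π ⊓ C.map π)) :
    (A ⊔ B).topologicalClosure ⊓ C ≤ (A ⊔ (B ⊓ C)).topologicalClosure := by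
  rintro g ⟨hgAB, hgC⟩
  refine mem_topologicalClosure_iff_forall_openNormalSubgroup.2 fun N₀ ↦ ?_
  obtain ⟨N, hN⟩ := exists_openNormalSubgroup_sup_inf_sup_le hB hC N₀
  have hg : g ∈ (A ⊔ N ⊔ (B ⊔ N)) ⊓ (C ⊔ N) :=
    ⟨sup_sup_distrib_right A B (N : Subgroup G) ▸
      mem_topologicalClosure_iff_forall_openNormalSubgroup.1 hgAB N, mem_sup_left hgC⟩
  have hBC : (B ⊔ N) ⊓ (C ⊔ N) ≤ A ⊔ (B ⊓ C) ⊔ N₀ := hN.trans (sup_le_sup_right le_sup_right _)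
  have hle : A ⊔ N ⊔ ((B ⊔ N) ⊓ (C ⊔ N)) ≤ A ⊔ (B ⊓ C) ⊔ N₀ :=
    sup_le (sup_le (le_sup_left.trans le_sup_left) ((le_inf le_sup_right le_sup_right).trans hBC))
      hBC
  exact hle (QuotientGroup.sup_inf_le_of_map_mk' (h N) hg)

end Profinite

theorem isModularElementClosed_iff_modular_in_open_quotients_general
    {G : Type*} [Group G] [TopologicalSpace G] [IsTopologicalGroup G]
    [CompactSpace G] [TotallyDisconnectedSpace G]
    (M : Subgroup G) (hM : IsClosed (M : Set G)) :
    IsModularElementClosed M ↔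
      ∀ (N : Subgroup G) [N.Normal], IsOpen (N : Set G) →
        IsModularElement (M.map (QuotientGroup.mk' N)) := by
  constructor
  · rintro ⟨h₁, h₂⟩ N _ hN
    have hN_le (W : Subgroup (G ⧸ N)) := QuotientGroup.le_comap_mk' N W
    have hclosed (W : Subgroup (G ⧸ N)) := Subgroup.isClosed_of_isOpen_le hN (hN_le W)
    have hmap := Subgroup.map_comap_eq_self_of_surjective (QuotientGroup.mk'_surjective N)
    refine ⟨fun X Z hXZ ↦ ?_, fun Y Z hMZ ↦ ?_⟩
    · simpa only [hmap] using QuotientGroup.map_mk'_sup_inf_eq_of_topologicalClosure hN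
        (le_sup_of_le_left (hN_le X)) (hN_le Z)
        (h₁ _ _ (hclosed X) (hclosed Z) (Subgroup.comap_mono hXZ))
    · simpa only [hmap] using QuotientGroup.map_mk'_sup_inf_eq_of_topologicalClosure hN
        (le_sup_of_le_right (le_inf (hN_le Y) (hN_le Z))) (hN_le Z)
        (h₂ _ _ (hclosed Y) (hclosed Z) (Subgroup.map_le_iff_le_comap.1 hMZ))
  · intro h
    refine ⟨fun X Z _ hZ hXZ ↦ ?_, fun Y Z hY hZ hMZ ↦ ?_⟩
    · exact le_antisymm (Subgroup.topologicalClosure_sup_inf_le hXZ hZ)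
        (Subgroup.topologicalClosure_sup_inf_ge_of_forall_openNormalSubgroup hM hZ
          fun N ↦ ((h N N.isOpen).1 _ _ (Subgroup.map_mono hXZ)).ge)
    · exact le_antisymm (Subgroup.topologicalClosure_sup_inf_le hMZ hZ)
        (Subgroup.topologicalClosure_sup_inf_ge_of_forall_openNormalSubgroup hY hZ
          fun N ↦ ((h N N.isOpen).2 _ _ (Subgroup.map_mono hMZ)).ge)

/-- A closed subgroup `M` of a profinite group `G` is a modular element
of the closed subgroup lattice of `G` iff, for every open normal subgroup `N` of `G`, the
image of `M` in `G/N` is a modular element of the subgroup lattice of `G/N`. -/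
theorem isModularElementClosed_iff_modular_in_open_quotients
    {G : Type*} [Group G] [TopologicalSpace G] [IsTopologicalGroup G]
    [CompactSpace G] [T2Space G] [TotallyDisconnectedSpace G]
    (M : Subgroup G) (hM : IsClosed (M : Set G)) :
    IsModularElementClosed M ↔
      ∀ (N : Subgroup G) [N.Normal], IsOpen (N : Set G) →
        IsModularElement (M.map (QuotientGroup.mk' N)) :=
  isModularElementClosed_iff_modular_in_open_quotients_general M hM
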